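/- Let X be a metacompact Moore space. There is a function r assigning to each collection U of open subsets of X a collection r(U) of open subsets such that: r(U) is point-finite; each member of r(U) is contained in some member of U; ∪r(U) = ∪U; if G, H ∈ r(U) with G ⊆ H then G = H; and if every member of U is contained in some member of an open collection V, then every member of r(U) is contained in some member of r(V). -/

import Mathlib

open Set TopologicalSpace

def PointFinite {X : Type*} (C : Set (Set X)) : Prop :=
  ∀ x : X, {U ∈ C | x ∈ U}.Finite

def Refines {X : Type*} (A B : Set (Set X)) : Prop :=
  ∀ U ∈ A, ∃ V ∈ B, U ⊆ V

def IsOpenCoverOfSets {X : Type*} [TopologicalSpace X] (C : Set (Set X)) : Prop :=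
  (∀ U ∈ C, IsOpen U) ∧ ⋃₀ C = Set.univ

def MonotonicallyMetacompact (X : Type*) [TopologicalSpace X] : Prop :=
  ∃ r : Set (Set X) → Set (Set X),
    (∀ U, IsOpenCoverOfSets U →
      IsOpenCoverOfSets (r U) ∧ PointFinite (r U) ∧ Refines (r U) U) ∧
    (∀ U V, IsOpenCoverOfSets U → IsOpenCoverOfSets V → Refines U V → Refines (r U) (r V))

def MonotonicallyCountablyMetacompact (X : Type*) [TopologicalSpace X] : Prop :=
  ∃ r : Set (Set X) → Set (Set X),
    (∀ U, IsOpenCoverOfSets U → U.Countable →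
      IsOpenCoverOfSets (r U) ∧ PointFinite (r U) ∧ Refines (r U) U) ∧
    (∀ U V, IsOpenCoverOfSets U → IsOpenCoverOfSets V → U.Countable → V.Countable →
      Refines U V → Refines (r U) (r V))

def IsPerfectSpace (X : Type*) [TopologicalSpace X] : Prop :=
  ∀ C : Set X, IsClosed C → ∃ f : ℕ → Set X, (∀ n, IsOpen (f n)) ∧ C = ⋂ n, f n

def St {X : Type*} (x : X) (C : Set (Set X)) : Set X := ⋃₀ {G ∈ C | x ∈ G}

def IsDevelopment {X : Type*} [TopologicalSpace X] (G : ℕ → Set (Set X)) : Prop :=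
  (∀ n, IsOpenCoverOfSets (G n)) ∧
  ∀ x : X, ∀ U : Set X, IsOpen U → x ∈ U → ∃ n, St x (G n) ⊆ U

def IsMooreSpace (X : Type*) [TopologicalSpace X] : Prop :=
  RegularSpace X ∧ T1Space X ∧ ∃ G : ℕ → Set (Set X), IsDevelopment G

def Metacompact (X : Type*) [TopologicalSpace X] : Prop :=
  ∀ U : Set (Set X), IsOpenCoverOfSets U →
    ∃ V, IsOpenCoverOfSets V ∧ PointFinite V ∧ Refines V U

/-!
Refine the development to one whose covers `H n` are point-finite and each refine the previous
one (metacompactness applied to the common refinement of `G (n + 1)` and `H n`). For a family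
`U`, a member `g ∈ H n` fits at level `n` if the `H n`-star of one of its points lies in a member
of `U`. Keep the fitting sets not contained in a fitting set of an earlier level, and let `r U`
consist of the maximal kept sets. If `x ∈ u ∈ U` and `St x (H N) ⊆ u`, no kept set of level
`> N` contains `x`: it lies in a member of `H N` through `x`, which fits at level `N`. So the kept
sets are point-finite, and every kept set lies in a maximal one. Enlarging `U` only adds fitting
sets, so every kept set for `U` lies in a kept set for `V`, hence in a member of `r V`.
-/

section

variable {X : Type*}

theorem Refines.refl (A : Set (Set X)) : Refines A A := fun a ha => ⟨a, ha, subset_rfl⟩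

theorem Refines.trans {A B C : Set (Set X)} (hAB : Refines A B) (hBC : Refines B C) :
    Refines A C := by
  intro a ha
  obtain ⟨b, hb, hab⟩ := hAB a ha
  obtain ⟨c, hc, hbc⟩ := hBC b hb
  exact ⟨c, hc, hab.trans hbc⟩

theorem Refines.sUnion_subset {A B : Set (Set X)} (h : Refines A B) : ⋃₀ A ⊆ ⋃₀ B := by
  rintro x ⟨a, ha, hxa⟩
  obtain ⟨b, hb, hab⟩ := h a ha
  exact ⟨b, hb, hab hxa⟩

theorem refines_image2_inter_left (A B : Set (Set X)) : Refines (image2 (· ∩ ·) A B) A := by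
  rintro _ ⟨a, ha, b, -, rfl⟩
  exact ⟨a, ha, inter_subset_left⟩

theorem refines_image2_inter_right (A B : Set (Set X)) : Refines (image2 (· ∩ ·) A B) B := by
  rintro _ ⟨a, -, b, hb, rfl⟩
  exact ⟨b, hb, inter_subset_right⟩

theorem subset_St {A : Set (Set X)} {a : Set X} (ha : a ∈ A) {x : X} (hx : x ∈ a) :
    a ⊆ St x A :=
  fun _ hy => ⟨a, ⟨ha, hx⟩, hy⟩

theorem St_subset_of_refines {A B : Set (Set X)} (h : Refines A B) (x : X) :
    St x A ⊆ St x B := by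
  rintro y ⟨a, ⟨ha, hxa⟩, hya⟩
  obtain ⟨b, hb, hab⟩ := h a ha
  exact ⟨b, ⟨hb, hab hxa⟩, hab hya⟩

theorem PointFinite.exists_subset_maximal {R : Set (Set X)} (hR : PointFinite R) {g : Set X}
    (hg : g ∈ R) (hne : g.Nonempty) : ∃ h, g ⊆ h ∧ Maximal (· ∈ R) h := by
  obtain ⟨x, hx⟩ := hne
  obtain ⟨h, hgh, hmax⟩ := (hR x).exists_le_maximal ⟨hg, hx⟩
  exact ⟨h, hgh, hmax.1.1, fun k hk hhk => hmax.2 ⟨hk, hhk hmax.1.2⟩ hhk⟩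

def firstLevelMembers (F : ℕ → Set (Set X)) : Set (Set X) :=
  {g | ∃ n, g ∈ F n ∧ ∀ m < n, ∀ h ∈ F m, ¬ g ⊆ h}

theorem exists_mem_firstLevelMembers_superset {F : ℕ → Set (Set X)} {s : Set X}
    (h : ∃ n, ∃ g ∈ F n, s ⊆ g) : ∃ g ∈ firstLevelMembers F, s ⊆ g := by
  classical
  obtain ⟨g, hg, hsg⟩ := Nat.find_spec h
  refine ⟨g, ⟨Nat.find h, hg, fun m hm k hk hgk => ?_⟩, hsg⟩
  exact Nat.find_min h hm ⟨k, hk, hsg.trans hgk⟩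

def fittingMembers (H : ℕ → Set (Set X)) (U : Set (Set X)) (n : ℕ) : Set (Set X) :=
  {g ∈ H n | ∃ u ∈ U, ∃ x ∈ g, St x (H n) ⊆ u}

theorem fittingMembers_mono (H : ℕ → Set (Set X)) {U V : Set (Set X)} (hUV : Refines U V)
    (n : ℕ) : fittingMembers H U n ⊆ fittingMembers H V n := by
  rintro g ⟨hg, u, hu, x, hxg, hxu⟩
  obtain ⟨v, hv, huv⟩ := hUV u hu
  exact ⟨hg, v, hv, x, hxg, hxu.trans huv⟩

theorem refines_firstLevelMembers_fittingMembers (H : ℕ → Set (Set X)) (U : Set (Set X)) :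
    Refines (firstLevelMembers (fittingMembers H U)) U := by
  rintro g ⟨n, ⟨hg, u, hu, x, hxg, hxu⟩, -⟩
  exact ⟨u, hu, (subset_St hg hxg).trans hxu⟩

theorem nonempty_of_mem_firstLevelMembers_fittingMembers {H : ℕ → Set (Set X)}
    {U : Set (Set X)} {g : Set X} (hg : g ∈ firstLevelMembers (fittingMembers H U)) :
    g.Nonempty := by
  obtain ⟨-, ⟨-, -, -, x, hxg, -⟩, -⟩ := hg
  exact ⟨x, hxg⟩

def maximalFittingMembers (H : ℕ → Set (Set X)) (U : Set (Set X)) : Set (Set X) :=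
  {g | Maximal (· ∈ firstLevelMembers (fittingMembers H U)) g}

section Topology

variable [TopologicalSpace X]

theorem IsOpenCoverOfSets.image2_inter {A B : Set (Set X)} (hA : IsOpenCoverOfSets A)
    (hB : IsOpenCoverOfSets B) : IsOpenCoverOfSets (image2 (· ∩ ·) A B) := by
  refine ⟨?_, eq_univ_of_forall fun x => ?_⟩
  · rintro _ ⟨a, ha, b, hb, rfl⟩
    exact (hA.1 a ha).inter (hB.1 b hb)
  · obtain ⟨a, ha, hxa⟩ := hA.2.symm ▸ mem_univ x
    obtain ⟨b, hb, hxb⟩ := hB.2.symm ▸ mem_univ x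
    exact ⟨a ∩ b, mem_image2_of_mem ha hb, hxa, hxb⟩

theorem IsDevelopment.of_refines {G H : ℕ → Set (Set X)} (hG : IsDevelopment G)
    (hH : ∀ n, IsOpenCoverOfSets (H n)) (hHG : ∀ n, Refines (H n) (G n)) : IsDevelopment H :=
  ⟨hH, fun x U hU hxU =>
    (hG.2 x U hU hxU).imp fun n hn => (St_subset_of_refines (hHG n) x).trans hn⟩

theorem IsDevelopment.subset_sUnion_firstLevelMembers_fittingMembers {H : ℕ → Set (Set X)}
    (hH : IsDevelopment H) {U : Set (Set X)} (hU : ∀ u ∈ U, IsOpen u) :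
    ⋃₀ U ⊆ ⋃₀ firstLevelMembers (fittingMembers H U) := by
  rintro x ⟨u, hu, hxu⟩
  obtain ⟨N, hN⟩ := hH.2 x u (hU u hu) hxu
  obtain ⟨h, hh, hxh⟩ := (hH.1 N).2.symm ▸ mem_univ x
  obtain ⟨g, hg, hxg⟩ :=
    exists_mem_firstLevelMembers_superset (F := fittingMembers H U) (s := {x})
      ⟨N, h, ⟨hh, u, hu, x, hxh, hN⟩, singleton_subset_iff.2 hxh⟩
  exact ⟨g, hg, singleton_subset_iff.1 hxg⟩

structure IsNestedPointFiniteDevelopment (H : ℕ → Set (Set X)) : Prop where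
  isDevelopment : IsDevelopment H
  pointFinite : ∀ n, PointFinite (H n)
  refines_of_le : ∀ ⦃m n⦄, m ≤ n → Refines (H n) (H m)

theorem Metacompact.exists_isNestedPointFiniteDevelopment (hX : Metacompact X)
    {G : ℕ → Set (Set X)} (hG : IsDevelopment G) :
    ∃ H : ℕ → Set (Set X), IsNestedPointFiniteDevelopment H := by
  choose! p hp using hX
  let H : ℕ → Set (Set X) := fun n =>
    Nat.rec (p (G 0)) (fun n Hn => p (image2 (· ∩ ·) (G (n + 1)) Hn)) n
  have hH : ∀ n, IsOpenCoverOfSets (H n) ∧ PointFinite (H n) ∧ Refines (H n) (G n) := by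
    intro n
    induction n with
    | zero => exact hp _ (hG.1 0)
    | succ n ih =>
      obtain ⟨hcov, hpf, href⟩ := hp _ ((hG.1 (n + 1)).image2_inter ih.1)
      exact ⟨hcov, hpf, href.trans (refines_image2_inter_left _ _)⟩
  have hstep : ∀ n, Refines (H (n + 1)) (H n) := fun n =>
    (hp _ ((hG.1 (n + 1)).image2_inter (hH n).1)).2.2.trans (refines_image2_inter_right _ _)
  refine ⟨H, hG.of_refines (fun n => (hH n).1) (fun n => (hH n).2.2), fun n => (hH n).2.1, ?_⟩
  intro m n hmn
  induction n, hmn using Nat.le_induction with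
  | base => exact Refines.refl _
  | succ n _ ih => exact (hstep n).trans ih

namespace IsNestedPointFiniteDevelopment

variable {H : ℕ → Set (Set X)} (hH : IsNestedPointFiniteDevelopment H) {U : Set (Set X)}
  (hU : ∀ u ∈ U, IsOpen u)
include hH hU

theorem pointFinite_firstLevelMembers_fittingMembers :
    PointFinite (firstLevelMembers (fittingMembers H U)) := by
  intro x
  rcases eq_empty_or_nonempty {g ∈ firstLevelMembers (fittingMembers H U) | x ∈ g} with
    hempty | ⟨g₀, hg₀, hxg₀⟩
  · exact hempty ▸ finite_empty
  obtain ⟨u, hu, hg₀u⟩ := refines_firstLevelMembers_fittingMembers H U g₀ hg₀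
  obtain ⟨N, hN⟩ := hH.isDevelopment.2 x u (hU u hu) (hg₀u hxg₀)
  refine ((finite_le_nat N).biUnion fun n _ => hH.pointFinite n x).subset ?_
  rintro g ⟨⟨n, hg, hfirst⟩, hxg⟩
  have hnN : n ≤ N := by
    by_contra! hNn
    obtain ⟨g', hg', hgg'⟩ := hH.refines_of_le hNn.le g hg.1
    exact hfirst N hNn g' ⟨hg', u, hu, x, hgg' hxg, hN⟩ hgg'
  exact mem_biUnion hnN ⟨hg.1, hxg⟩

theorem exists_mem_maximalFittingMembers_superset {g : Set X}
    (hg : g ∈ firstLevelMembers (fittingMembers H U)) :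
    ∃ h ∈ maximalFittingMembers H U, g ⊆ h := by
  obtain ⟨h, hgh, hmax⟩ :=
    (hH.pointFinite_firstLevelMembers_fittingMembers hU).exists_subset_maximal hg
      (nonempty_of_mem_firstLevelMembers_fittingMembers hg)
  exact ⟨h, hmax, hgh⟩

end IsNestedPointFiniteDevelopment

end Topology

end

theorem stmt6 {X : Type*} [TopologicalSpace X] (h1 : IsMooreSpace X) (h2 : Metacompact X) :
    ∃ r : Set (Set X) → Set (Set X),
      (∀ U, (∀ u ∈ U, IsOpen u) →
        (∀ g ∈ r U, IsOpen g) ∧ PointFinite (r U) ∧ Refines (r U) U ∧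
        ⋃₀ r U = ⋃₀ U ∧ (∀ G ∈ r U, ∀ H ∈ r U, G ⊆ H → G = H)) ∧
      (∀ U V : Set (Set X), (∀ u ∈ U, IsOpen u) → (∀ v ∈ V, IsOpen v) → Refines U V →
        Refines (r U) (r V)) := by
  obtain ⟨-, -, G, hG⟩ := h1
  obtain ⟨H, hH⟩ := Metacompact.exists_isNestedPointFiniteDevelopment h2 hG
  have hrefines U : Refines (maximalFittingMembers H U) U := fun g hg =>
    refines_firstLevelMembers_fittingMembers H U g hg.1
  refine ⟨maximalFittingMembers H, fun U hU => ⟨?_, fun x => ?_, hrefines U, ?_, ?_⟩, ?_⟩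
  · rintro g ⟨⟨n, hg, -⟩, -⟩
    exact (hH.isDevelopment.1 n).1 g hg.1
  · exact (hH.pointFinite_firstLevelMembers_fittingMembers hU x).subset
      fun g hg => ⟨hg.1.1, hg.2⟩
  · refine (hrefines U).sUnion_subset.antisymm fun x hx => ?_
    obtain ⟨g, hg, hxg⟩ := hH.isDevelopment.subset_sUnion_firstLevelMembers_fittingMembers hU hx
    obtain ⟨h, hh, hgh⟩ := hH.exists_mem_maximalFittingMembers_superset hU hg
    exact ⟨h, hh, hgh hxg⟩
  · exact fun g hg h hh hgh => hgh.antisymm (hg.2 hh.1 hgh)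
  · intro U V _ hV hUV g hg
    obtain ⟨n, hgU, -⟩ := hg.1
    obtain ⟨h, hh, hgh⟩ :=
      exists_mem_firstLevelMembers_superset ⟨n, g, fittingMembers_mono H hUV n hgU, subset_rfl⟩
    obtain ⟨k, hk, hhk⟩ := hH.exists_mem_maximalFittingMembers_superset hV hh
    exact ⟨k, hk, hgh.trans hhk⟩
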